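/- Let X be an extremally disconnected regular Hausdorff space, Y a completely regular Hausdorff space, and φ : X → Set Y an usco mapping. Then for each dense subset A ⊆ X, each continuous selection for the restriction φ↾A can be extended to a continuous selection for φ. -/

import Mathlib

/-!
Near each point `x`, the values of `g` form the filter `map g (comap (↑) (𝓝 x))`. Upper
semicontinuity puts it below the neighbourhood filter of the compact set `φ x`, so it has cluster
points in `φ x`; extremal disconnectedness of `X` makes the cluster point unique, because disjoint
open sets of `Y` pull back to open sets of `X` with disjoint closures. Hence `g` has a limit in
`φ x` along `x`, and the extension of `g` by these limits is continuous since `Y` is regular.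
-/

open Filter Topology Set

theorem IsCompact.exists_le_nhds_of_ultrafilter_le_nhdsSet {X : Type*} [TopologicalSpace X]
    {K : Set X} (hK : IsCompact K) (u : Ultrafilter X) (hu : ↑u ≤ 𝓝ˢ K) :
    ∃ x ∈ K, ↑u ≤ 𝓝 x := by
  by_contra! H
  have hdisj : Disjoint (u : Filter X) (𝓝ˢ K) :=
    hK.disjoint_nhdsSet_right.2 fun x hx => Ultrafilter.disjoint_iff_not_le.2 (H x hx)
  exact u.neBot.ne (disjoint_self.1 (hdisj.mono_right hu))

theorem IsCompact.exists_le_nhds_of_le_nhdsSet {X : Type*} [TopologicalSpace X] {K : Set X}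
    (hK : IsCompact K) {l : Filter X} [l.NeBot] (hl : l ≤ 𝓝ˢ K)
    (h : ∀ x₁ ∈ K, ∀ x₂ ∈ K, ClusterPt x₁ l → ClusterPt x₂ l → x₁ = x₂) :
    ∃ y ∈ K, l ≤ 𝓝 y := by
  have hlim (u : Ultrafilter X) (hu : ↑u ≤ l) : ∃ x ∈ K, ↑u ≤ 𝓝 x ∧ ClusterPt x l :=
    let ⟨x, hxK, hux⟩ := hK.exists_le_nhds_of_ultrafilter_le_nhdsSet u (hu.trans hl)
    ⟨x, hxK, hux, (ClusterPt.of_le_nhds hux).mono hu⟩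
  obtain ⟨y, hyK, -, hy⟩ := hlim (Ultrafilter.of l) (Ultrafilter.of_le l)
  refine ⟨y, hyK, le_iff_ultrafilter.2 fun u hu => ?_⟩
  obtain ⟨x, hxK, hux, hx⟩ := hlim u hu
  rwa [← h x hxK y hyK hx hy]

theorem tendsto_nhdsSet_of_isOpen_setOf_subset {X Y : Type*} [TopologicalSpace X]
    [TopologicalSpace Y] {φ : X → Set Y} (husc : ∀ U : Set Y, IsOpen U → IsOpen {x | φ x ⊆ U})
    {A : Set X} {g : A → Y} (hgsel : ∀ a : A, g a ∈ φ a) (x : X) :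
    Tendsto g (comap (↑) (𝓝 x)) (𝓝ˢ (φ x)) :=
  (hasBasis_nhdsSet _).tendsto_right_iff.2 fun U ⟨hU, hxU⟩ =>
    (Eventually.comap ((husc U hU).mem_nhds hxU) ((↑) : A → X)).mono fun a ha => ha (hgsel a)

theorem MapClusterPt.mem_closure_image_val_preimage {X Y : Type*} [TopologicalSpace X]
    [TopologicalSpace Y] {A : Set X} {g : A → Y} {x : X} {y : Y}
    (h : MapClusterPt y (comap (↑) (𝓝 x)) g) {V : Set Y} (hV : V ∈ 𝓝 y) :
    x ∈ closure ((↑) '' (g ⁻¹' V)) := by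
  rw [mem_closure_iff_frequently]
  exact (frequently_comap.1 (h.frequently hV)).mono fun z ⟨a, haz, ha⟩ => ⟨a, ha, haz⟩

theorem ExtremallyDisconnected.eq_of_mapClusterPt {X Y : Type*} [TopologicalSpace X]
    [ExtremallyDisconnected X] [TopologicalSpace Y] [T2Space Y] {A : Set X} (hA : Dense A)
    {g : A → Y} (hg : Continuous g) {x : X} {y₁ y₂ : Y}
    (h₁ : MapClusterPt y₁ (comap (↑) (𝓝 x)) g) (h₂ : MapClusterPt y₂ (comap (↑) (𝓝 x)) g) :
    y₁ = y₂ := by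
  by_contra hne
  obtain ⟨V₁, V₂, hV₁, hV₂, hy₁, hy₂, hV⟩ := t2_separation hne
  obtain ⟨U₁, hU₁, hU₁V⟩ := isOpen_induced_iff.1 (hV₁.preimage hg)
  obtain ⟨U₂, hU₂, hU₂V⟩ := isOpen_induced_iff.1 (hV₂.preimage hg)
  have hAU : Disjoint A (U₁ ∩ U₂) := Set.disjoint_left.2 fun z hzA hzU => by
    have hz₁ : (⟨z, hzA⟩ : A) ∈ g ⁻¹' V₁ := hU₁V ▸ hzU.1
    have hz₂ : (⟨z, hzA⟩ : A) ∈ g ⁻¹' V₂ := hU₂V ▸ hzU.2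
    exact Set.disjoint_left.1 hV hz₁ hz₂
  have hU : Disjoint U₁ U₂ := by
    have := hAU.closure_left (hU₁.inter hU₂)
    rwa [hA.closure_eq, univ_disjoint, ← disjoint_iff_inter_eq_empty] at this
  have mem_closure_of (U : Set X) (V : Set Y) (hUV : (↑) ⁻¹' U = g ⁻¹' V) (y : Y) (hy : V ∈ 𝓝 y)
      (h : MapClusterPt y (comap (↑) (𝓝 x)) g) : x ∈ closure U :=
    closure_mono (hUV ▸ image_preimage_subset _ _) (h.mem_closure_image_val_preimage hy)
  exact (ExtremallyDisconnected.disjoint_closure_of_disjoint_isOpen hU hU₁ hU₂).le_bot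
    ⟨mem_closure_of U₁ V₁ hU₁V y₁ (hV₁.mem_nhds hy₁) h₁,
      mem_closure_of U₂ V₂ hU₂V y₂ (hV₂.mem_nhds hy₂) h₂⟩

theorem selection_extension_of_extremallyDisconnected_completelyRegular_general
    {X Y : Type*} [TopologicalSpace X]
    [ExtremallyDisconnected X]
    [TopologicalSpace Y] [T2Space Y] [CompletelyRegularSpace Y]
    (φ : X → Set Y)
    (hcomp : ∀ x, IsCompact (φ x))
    (husc : ∀ U : Set Y, IsOpen U → IsOpen {x | φ x ⊆ U})
    (A : Set X) (hA : Dense A)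
    (g : A → Y) (hg : Continuous g) (hgsel : ∀ a : A, g a ∈ φ a) :
    ∃ f : X → Y, Continuous f ∧ (∀ x, f x ∈ φ x) ∧ ∀ a : A, f a = g a := by
  have hlim (x : X) : ∃ y ∈ φ x, Tendsto g (comap (↑) (𝓝 x)) (𝓝 y) :=
    haveI := hA.comap_val_nhds_neBot x
    (hcomp x).exists_le_nhds_of_le_nhdsSet (tendsto_nhdsSet_of_isOpen_setOf_subset husc hgsel x)
      fun _ _ _ _ h₁ h₂ => ExtremallyDisconnected.eq_of_mapClusterPt hA hg h₁ h₂
  choose f hfφ hf using hlim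
  refine ⟨hA.extend g, hA.continuous_extend fun x => ⟨f x, hf x⟩, fun x => ?_, hA.extend_eq hg⟩
  rw [hA.extend_eq_of_tendsto (hf x)]
  exact hfφ x

/-- Extension of densely defined continuous selections for usco mappings into
completely regular Hausdorff spaces, on extremally disconnected regular
Hausdorff domains. -/
theorem selection_extension_of_extremallyDisconnected_completelyRegular
    {X Y : Type*} [TopologicalSpace X] [T2Space X] [RegularSpace X]
    [ExtremallyDisconnected X]
    [TopologicalSpace Y] [T2Space Y] [CompletelyRegularSpace Y]
    (φ : X → Set Y)
    (hne : ∀ x, (φ x).Nonempty)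
    (hcomp : ∀ x, IsCompact (φ x))
    (husc : ∀ U : Set Y, IsOpen U → IsOpen {x | φ x ⊆ U})
    (A : Set X) (hA : Dense A)
    (g : A → Y) (hg : Continuous g) (hgsel : ∀ a : A, g a ∈ φ a) :
    ∃ f : X → Y, Continuous f ∧ (∀ x, f x ∈ φ x) ∧ ∀ a : A, f a = g a :=
  selection_extension_of_extremallyDisconnected_completelyRegular_general φ hcomp husc A hA g hg
    hgsel
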